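/- The level-3 theta functions satisfy the duplication formulas: θ₀(0)³·θ₀(2z) = θ₁(z)·(θ₂(z)³ − θ₀(z)³), θ₀(0)³·θ₁(2z) = θ₀(z)·(θ₁(z)³ − θ₂(z)³), and θ₀(0)³·θ₂(2z) = θ₂(z)·(θ₀(z)³ − θ₁(z)³), for all z ∈ ℂ and τ in the upper half plane. -/

import Mathlib

/-- Level-3 theta function `θ_k(z,τ)`. -/
noncomputable def theta3 (k : ℤ) (z τ : ℂ) : ℂ :=
  ∑' n : ℤ, Complex.exp (3 * Real.pi * Complex.I * ((n : ℂ) + (k : ℂ) / 3 - 1 / 6) ^ 2 * τ) *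
    Complex.exp (6 * Real.pi * Complex.I * ((n : ℂ) + (k : ℂ) / 3 - 1 / 6) * (z + 1 / 2))

/-!
Each product of four theta functions is a series over `ℤ⁴` whose summand at `ν = n + shift` is
`exp (3πiτ ∑ νᵢ² + (linear in ν))`. Split the series of `θ₀(0)³ θ₀(2z)`, `θ₁ θ₂³` and `θ₁ θ₀³` by
the parity of `n₁ + n₂ + n₃ + n₄`. Maps `ν ↦ ½ H ν` with `H` a `4 × 4` Hadamard matrix preserve
`∑ νᵢ²` and match the halves termwise, up to factors `exp (2πi ℤ)` and one sign: the odd half of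
the first series is the even half of the second, its even half is minus the even half of the third,
and the odd halves of the second and third agree. This gives the first formula. The translation
`z ↦ z + τ / 3` multiplies every `θ_k(z)` by the same factor and raises `k` by one, and
`θ_{k+3} = θ_k`, so the first formula cycles into the other two.
-/

open Complex Real

namespace Theta3

noncomputable def theta3Term (k : ℤ) (z τ : ℂ) (n : ℤ) : ℂ :=
  cexp (3 * π * I * ((n : ℂ) + (k : ℂ) / 3 - 1 / 6) ^ 2 * τ) *
    cexp (6 * π * I * ((n : ℂ) + (k : ℂ) / 3 - 1 / 6) * (z + 1 / 2))

theorem theta3_eq_tsum (k : ℤ) (z τ : ℂ) : theta3 k z τ = ∑' n, theta3Term k z τ n := rfl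

theorem theta3Term_eq_mul_jacobiTheta₂_term (k : ℤ) (z τ : ℂ) (n : ℤ) :
    theta3Term k z τ n =
      cexp (3 * π * I * ((k : ℂ) / 3 - 1 / 6) ^ 2 * τ +
          6 * π * I * ((k : ℂ) / 3 - 1 / 6) * (z + 1 / 2)) *
        jacobiTheta₂_term n (3 * (z + 1 / 2) + 3 * ((k : ℂ) / 3 - 1 / 6) * τ) (3 * τ) := by
  rw [theta3Term, jacobiTheta₂_term, ← Complex.exp_add, ← Complex.exp_add]
  ring_nf

theorem summable_norm_theta3Term {τ : ℂ} (hτ : 0 < τ.im) (k : ℤ) (z : ℂ) :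
    Summable fun n ↦ ‖theta3Term k z τ n‖ := by
  have h3τ : 0 < (3 * τ).im := by simpa using hτ
  have hj := summable_norm_iff.mpr ((summable_jacobiTheta₂_term_iff
    (3 * (z + 1 / 2) + 3 * ((k : ℂ) / 3 - 1 / 6) * τ) _).mpr h3τ)
  simpa only [theta3Term_eq_mul_jacobiTheta₂_term, norm_mul] using hj.mul_left _

theorem theta3_add_three_mul (k m : ℤ) (z τ : ℂ) : theta3 (k + 3 * m) z τ = theta3 k z τ := by
  rw [theta3_eq_tsum, theta3_eq_tsum, ← (Equiv.addRight m).tsum_eq (theta3Term k z τ)]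
  refine tsum_congr fun n ↦ ?_
  simp only [theta3Term, Equiv.coe_addRight]
  push_cast
  ring_nf

theorem theta3_congr {k k' : ℤ} (h : k ≡ k' [ZMOD 3]) : theta3 k = theta3 k' := by
  obtain ⟨m, hm⟩ := h.dvd
  ext z τ
  rw [show k' = k + 3 * m by omega, theta3_add_three_mul]

noncomputable def shiftFactor (z τ : ℂ) : ℂ :=
  cexp (-(π * I * τ / 3) - 2 * π * I * (z + 1 / 2))

theorem theta3_add_div_three (k : ℤ) (z τ : ℂ) :
    theta3 k (z + τ / 3) τ = shiftFactor z τ * theta3 (k + 1) z τ := by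
  rw [theta3_eq_tsum, theta3_eq_tsum, ← tsum_mul_left]
  refine tsum_congr fun n ↦ ?_
  simp only [theta3Term, shiftFactor, ← Complex.exp_add]
  push_cast
  ring_nf

theorem hasSum_mul_four {ι R : Type*} [NormedRing R] [CompleteSpace R] {f₁ f₂ f₃ f₄ : ι → R}
    (h₁ : Summable (‖f₁ ·‖)) (h₂ : Summable (‖f₂ ·‖)) (h₃ : Summable (‖f₃ ·‖))
    (h₄ : Summable (‖f₄ ·‖)) :
    HasSum (fun p : ι × ι × ι × ι ↦ f₁ p.1 * (f₂ p.2.1 * (f₃ p.2.2.1 * f₄ p.2.2.2)))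
      ((∑' n, f₁ n) * ((∑' n, f₂ n) * ((∑' n, f₃ n) * ∑' n, f₄ n))) := by
  rw [tsum_mul_tsum_of_summable_norm h₃ h₄, tsum_mul_tsum_of_summable_norm h₂ (h₃.mul_norm h₄),
    tsum_mul_tsum_of_summable_norm h₁ (h₂.mul_norm (h₃.mul_norm h₄))]
  exact (h₁.mul_norm (h₂.mul_norm (h₃.mul_norm h₄))).of_norm.hasSum

local notation "ℤ⁴" => ℤ × ℤ × ℤ × ℤ

noncomputable def theta3Term4 (k₁ k₂ k₃ k₄ : ℤ) (z₁ z₂ z₃ z₄ τ : ℂ) (p : ℤ⁴) : ℂ :=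
  theta3Term k₁ z₁ τ p.1 *
    (theta3Term k₂ z₂ τ p.2.1 * (theta3Term k₃ z₃ τ p.2.2.1 * theta3Term k₄ z₄ τ p.2.2.2))

theorem hasSum_theta3Term4 {τ : ℂ} (hτ : 0 < τ.im) (k₁ k₂ k₃ k₄ : ℤ) (z₁ z₂ z₃ z₄ : ℂ) :
    HasSum (theta3Term4 k₁ k₂ k₃ k₄ z₁ z₂ z₃ z₄ τ)
      (theta3 k₁ z₁ τ * (theta3 k₂ z₂ τ * (theta3 k₃ z₃ τ * theta3 k₄ z₄ τ))) :=
  hasSum_mul_four (summable_norm_theta3Term hτ k₁ z₁) (summable_norm_theta3Term hτ k₂ z₂)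
    (summable_norm_theta3Term hτ k₃ z₃) (summable_norm_theta3Term hτ k₄ z₄)

def evenCoset (u : ℤ⁴) : ℤ⁴ := (u.1, u.2.1, u.2.2.1, u.1 + u.2.1 + u.2.2.1 + 2 * u.2.2.2)

def oddCoset (u : ℤ⁴) : ℤ⁴ := (u.1, u.2.1, u.2.2.1, u.1 + u.2.1 + u.2.2.1 + 2 * u.2.2.2 + 1)

def cosetEquiv : ℤ⁴ ⊕ ℤ⁴ ≃ ℤ⁴ where
  toFun := Sum.elim evenCoset oddCoset
  invFun p :=
    let m := p.2.2.2 - p.1 - p.2.1 - p.2.2.1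
    if m % 2 = 0 then .inl (p.1, p.2.1, p.2.2.1, m / 2) else .inr (p.1, p.2.1, p.2.2.1, m / 2)
  left_inv := by
    rintro (⟨a, b, c, d⟩ | ⟨a, b, c, d⟩)
    · simp [evenCoset, add_sub_assoc]
    · simp only [Sum.elim_inr, oddCoset]; ring_nf; simp; omega
  right_inv := by
    rintro ⟨a, b, c, d⟩
    by_cases h : (d - a - b - c) % 2 = 0 <;> simp [h, evenCoset, oddCoset] <;> omega

theorem tsum_eq_tsum_evenCoset_add_tsum_oddCoset {E : Type*} [NormedAddCommGroup E]
    [CompleteSpace E] {F : ℤ⁴ → E} (hF : Summable F) :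
    ∑' p, F p = ∑' u, F (evenCoset u) + ∑' u, F (oddCoset u) := by
  have hFe := hF.comp_injective cosetEquiv.injective
  rw [← cosetEquiv.tsum_eq]
  exact Summable.tsum_sum (f := fun i ↦ F (cosetEquiv i)) (hFe.comp_injective Sum.inl_injective)
    (hFe.comp_injective Sum.inr_injective)

def hadamard₁ : ℤ⁴ ≃ ℤ⁴ where
  toFun u := (-u.2.2.1 - u.2.2.2, -u.2.1 - u.2.2.2, u.1 + u.2.2.2, u.2.1 + u.2.2.1 + u.2.2.2)
  invFun p := (p.1 + p.2.1 + p.2.2.1 + p.2.2.2, p.1 + p.2.2.2, p.2.1 + p.2.2.2,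
    -p.1 - p.2.1 - p.2.2.2)
  left_inv := by rintro ⟨a, b, c, d⟩; ext <;> dsimp only <;> ring
  right_inv := by rintro ⟨a, b, c, d⟩; ext <;> dsimp only <;> ring

def hadamard₂ : ℤ⁴ ≃ ℤ⁴ where
  toFun u := (-u.1 - u.2.2.2, u.2.1 + u.2.2.2, u.2.2.1 + u.2.2.2, u.1)
  invFun p := (p.2.2.2, p.1 + p.2.1 + p.2.2.2, p.1 + p.2.2.1 + p.2.2.2, -p.1 - p.2.2.2)
  left_inv := by rintro ⟨a, b, c, d⟩; ext <;> dsimp only <;> ring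
  right_inv := by rintro ⟨a, b, c, d⟩; ext <;> dsimp only <;> ring

def hadamard₃ : ℤ⁴ ≃ ℤ⁴ where
  toFun u := (u.2.1 + u.2.2.1 + u.2.2.2 + 1, u.1 + u.2.2.1 + u.2.2.2 + 1, u.1 + u.2.1 + u.2.2.2 + 1,
    -u.1 - u.2.1 - u.2.2.1 - 2 * u.2.2.2 - 2)
  invFun p := (p.2.1 + p.2.2.1 + p.2.2.2, p.1 + p.2.2.1 + p.2.2.2, p.1 + p.2.1 + p.2.2.2,
    -p.1 - p.2.1 - p.2.2.1 - 2 * p.2.2.2 - 1)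
  left_inv := by rintro ⟨a, b, c, d⟩; ext <;> dsimp only <;> ring
  right_inv := by rintro ⟨a, b, c, d⟩; ext <;> dsimp only <;> ring

section DuplicationSummands

variable (z τ : ℂ)

theorem theta3Term4_oddCoset_hadamard₁ (u : ℤ⁴) :
    theta3Term4 0 0 0 0 0 0 0 (2 * z) τ (oddCoset (hadamard₁ u)) =
      theta3Term4 1 2 2 2 z z z z τ (evenCoset u) := by
  obtain ⟨a, b, c, d⟩ := u
  simp only [theta3Term4, theta3Term, oddCoset, evenCoset, hadamard₁, Equiv.coe_fn_mk,
    ← Complex.exp_add]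
  exact exp_eq_exp_iff_exists_int.mpr ⟨-3 * (b + c + d) - 2, by push_cast; ring⟩

theorem theta3Term4_evenCoset_hadamard₂ (u : ℤ⁴) :
    theta3Term4 0 0 0 0 0 0 0 (2 * z) τ (evenCoset (hadamard₂ u)) =
      -theta3Term4 1 0 0 0 z z z z τ (evenCoset u) := by
  obtain ⟨a, b, c, d⟩ := u
  simp only [theta3Term4, theta3Term, evenCoset, hadamard₂, Equiv.coe_fn_mk, ← Complex.exp_add]
  conv_rhs => rw [← neg_one_mul, ← exp_pi_mul_I, ← Complex.exp_add]
  exact exp_eq_exp_iff_exists_int.mpr ⟨-3 * a - 1, by push_cast; ring⟩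

theorem theta3Term4_oddCoset_hadamard₃ (u : ℤ⁴) :
    theta3Term4 1 0 0 0 z z z z τ (oddCoset (hadamard₃ u)) =
      theta3Term4 1 2 2 2 z z z z τ (oddCoset u) := by
  obtain ⟨a, b, c, d⟩ := u
  simp only [theta3Term4, theta3Term, oddCoset, hadamard₃, Equiv.coe_fn_mk, ← Complex.exp_add]
  congr 1
  push_cast
  ring

end DuplicationSummands

theorem theta3_duplication_zero {τ : ℂ} (hτ : 0 < τ.im) (z : ℂ) :
    theta3 0 0 τ ^ 3 * theta3 0 (2 * z) τ =
      theta3 1 z τ * (theta3 2 z τ ^ 3 - theta3 0 z τ ^ 3) := by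
  have hL := hasSum_theta3Term4 hτ 0 0 0 0 0 0 0 (2 * z)
  have hA := hasSum_theta3Term4 hτ 1 2 2 2 z z z z
  have hB := hasSum_theta3Term4 hτ 1 0 0 0 z z z z
  have hLo : ∑' u, theta3Term4 0 0 0 0 0 0 0 (2 * z) τ (oddCoset u) =
      ∑' u, theta3Term4 1 2 2 2 z z z z τ (evenCoset u) := by
    rw [← hadamard₁.tsum_eq]
    exact tsum_congr (theta3Term4_oddCoset_hadamard₁ z τ)
  have hLe : ∑' u, theta3Term4 0 0 0 0 0 0 0 (2 * z) τ (evenCoset u) =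
      -∑' u, theta3Term4 1 0 0 0 z z z z τ (evenCoset u) := by
    rw [← hadamard₂.tsum_eq, ← tsum_neg]
    exact tsum_congr (theta3Term4_evenCoset_hadamard₂ z τ)
  have hBo : ∑' u, theta3Term4 1 0 0 0 z z z z τ (oddCoset u) =
      ∑' u, theta3Term4 1 2 2 2 z z z z τ (oddCoset u) := by
    rw [← hadamard₃.tsum_eq]
    exact tsum_congr (theta3Term4_oddCoset_hadamard₃ z τ)
  have split {F : ℤ⁴ → ℂ} {S : ℂ} (h : HasSum F S) :
      S = ∑' u, F (evenCoset u) + ∑' u, F (oddCoset u) :=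
    h.tsum_eq ▸ tsum_eq_tsum_evenCoset_add_tsum_oddCoset h.summable
  linear_combination split hL - split hA + split hB + hLo + hLe + hBo

theorem theta3_duplication {τ : ℂ} (hτ : 0 < τ.im) (j : ℕ) (z : ℂ) :
    theta3 0 0 τ ^ 3 * theta3 (2 * j) (2 * z) τ =
      theta3 (j + 1) z τ * (theta3 (j + 2) z τ ^ 3 - theta3 j z τ ^ 3) := by
  induction j generalizing z with
  | zero => simpa using theta3_duplication_zero hτ z
  | succ j ih =>
    have hfactor :
        shiftFactor (2 * z + τ / 3) τ * shiftFactor (2 * z) τ = shiftFactor z τ ^ 4 := by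
      simp only [shiftFactor, ← Complex.exp_add, ← Complex.exp_nat_mul]
      exact exp_eq_exp_iff_exists_int.mpr ⟨1, by push_cast; ring⟩
    have h := ih (z + τ / 3)
    rw [show 2 * (z + τ / 3) = 2 * z + τ / 3 + τ / 3 by ring] at h
    simp only [theta3_add_div_three] at h
    refine mul_left_cancel₀ (pow_ne_zero 4 (Complex.exp_ne_zero _) : shiftFactor z τ ^ 4 ≠ 0) ?_
    rw [show 2 * ((j + 1 : ℕ) : ℤ) = 2 * j + 1 + 1 by push_cast; ring,
      show ((j + 1 : ℕ) : ℤ) + 2 = j + 2 + 1 by push_cast; ring, Nat.cast_succ]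
    linear_combination h - theta3 0 0 τ ^ 3 * theta3 (2 * j + 1 + 1) (2 * z) τ * hfactor

end Theta3

theorem theta3_duplication_formulas (τ : ℂ) (hτ : 0 < τ.im) (z : ℂ) :
    theta3 0 0 τ ^ 3 * theta3 0 (2 * z) τ =
      theta3 1 z τ * (theta3 2 z τ ^ 3 - theta3 0 z τ ^ 3) ∧
    theta3 0 0 τ ^ 3 * theta3 1 (2 * z) τ =
      theta3 0 z τ * (theta3 1 z τ ^ 3 - theta3 2 z τ ^ 3) ∧
    theta3 0 0 τ ^ 3 * theta3 2 (2 * z) τ =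
      theta3 2 z τ * (theta3 0 z τ ^ 3 - theta3 1 z τ ^ 3) := by
  refine ⟨Theta3.theta3_duplication_zero hτ z, ?_, ?_⟩
  · have h := Theta3.theta3_duplication hτ 2 z
    norm_num at h
    rwa [Theta3.theta3_congr (by decide : (4 : ℤ) ≡ 1 [ZMOD 3]),
      Theta3.theta3_congr (by decide : (3 : ℤ) ≡ 0 [ZMOD 3])] at h
  · have h := Theta3.theta3_duplication hτ 1 z
    norm_num at h
    rwa [Theta3.theta3_congr (by decide : (3 : ℤ) ≡ 0 [ZMOD 3])] at h
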